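/- Let d > 2 and work in ℂ² ⊗ ℂ^d. The linear span S_{P,1} of the Parthasarathy space S_P and the van der Monde vector z₁ contains only finitely many one-dimensional subspaces spanned by product vectors; their number (the product index of S_{P,1}) equals d if d is odd, and equals d − 1 if d is even. The product vectors other than multiples of z₁ are, up to scalars, the vectors (|0⟩ + α|1⟩) ⊗ (Σ_{r=0}^{d−1} c_r |r⟩) where α = −e^{2πit/d} for 1 ≤ t ≤ d−1 with t ≠ d/2, and c_r = (2 + (−1)^r α^r (α − 1))/(1 + α). -/

import Mathlib

/-!
Pairing with `z_λ` evaluates the polynomial `P_ξ = Σ ξ(s,r) X^(s+r)` at `conj λ`, and pairing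
with `z_∞` reads off `ξ(1,d-1)`; hence `ξ ∈ S_{P,1}` iff `P_ξ = c (1 + X)(1 + X + ⋯ + X^(d-1))`
with `c = ξ(1,d-1)`. For a product vector `u ⊗ v` the polynomial factors as
`(u₀ + u₁ X) · V(X)`, so the root `-u₀/u₁` of the linear factor is `-1` or a `d`-th root of unity
other than `1`. Writing `γ = u₁/u₀`, this says `γ = 1` or `γ = α_t` with `0 < t < d`. Since
`(1 + α_t X) · Σ c_r X^r = (1 + X)(1 + ⋯ + X^(d-1))`, cancelling `1 + γX` forces `V` to be a
multiple of `1 + ⋯ + X^(d-1)`, resp. of `Σ c_r X^r`.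
Finally `α_t = 1` exactly when `2t = d`, in which case the line is that of `z₁` again.
-/

noncomputable section

/-- the Hilbert space ℂ² ⊗ ℂ^d, realized as ℂ^{2d} -/
abbrev H2d (d : ℕ) : Type := EuclideanSpace ℂ (Fin 2 × Fin d)

/-- standard basis vector of ℂ² -/
def ket2 (i : Fin 2) : EuclideanSpace ℂ (Fin 2) := EuclideanSpace.single i 1

/-- elementary tensor u ⊗ v with u ∈ ℂ², v ∈ ℂ^d -/
def tp2d (d : ℕ) (u : EuclideanSpace ℂ (Fin 2)) (v : EuclideanSpace ℂ (Fin d)) : H2d d :=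
  WithLp.toLp 2 (fun p : Fin 2 × Fin d => u p.1 * v p.2)

/-- the van der Monde vector z_λ = (|0⟩ + λ|1⟩) ⊗ (Σ_r λ^r |r⟩) -/
def z2d (d : ℕ) (lam : ℂ) : H2d d := WithLp.toLp 2 (fun p : Fin 2 × Fin d => lam ^ (p.1 : ℕ) * lam ^ (p.2 : ℕ))

/-- the van der Monde vector z_∞ = |1⟩ ⊗ |d−1⟩ -/
def z2dinf (d : ℕ) : H2d d :=
  WithLp.toLp 2 (fun p : Fin 2 × Fin d => (if p.1 = 1 then 1 else 0) * (if (p.2 : ℕ) = d - 1 then 1 else 0))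

/-- the span of all van der Monde vectors -/
def F2d (d : ℕ) : Submodule ℂ (H2d d) :=
  Submodule.span ℂ (insert (z2dinf d) (Set.range (z2d d)))

/-- the Parthasarathy completely entangled subspace of ℂ² ⊗ ℂ^d -/
def SP2d (d : ℕ) : Submodule ℂ (H2d d) := (F2d d)ᗮ

/-- the perturbation of `S_P` by the van der Monde vector `z₁` -/
def SP2d1 (d : ℕ) : Submodule ℂ (H2d d) := SP2d d ⊔ Submodule.span ℂ {z2d d 1}

/-- the set of one-dimensional subspaces of `T` spanned by (nonzero) product vectors -/
def prodLines2d (d : ℕ) (T : Submodule ℂ (H2d d)) : Set (Submodule ℂ (H2d d)) :=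
  {L | ∃ ξ : H2d d, ξ ≠ 0 ∧ ξ ∈ T ∧ (∃ u v, ξ = tp2d d u v) ∧ L = Submodule.span ℂ {ξ}}

/-- α_t = −e^{2πit/d} -/
def alpha2d (d t : ℕ) : ℂ := -Complex.exp (2 * Real.pi * Complex.I * t / d)

/-- the second factor Σ_r c_r |r⟩ with c_r = (2 + (−1)^r α^r (α − 1))/(1 + α) -/
def cvec (d : ℕ) (a : ℂ) : EuclideanSpace ℂ (Fin d) :=
  WithLp.toLp 2 (fun r : Fin d => (2 + (-1) ^ (r : ℕ) * a ^ (r : ℕ) * (a - 1)) / (1 + a))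

/-- the new product vector corresponding to the parameter `t` -/
def pvec (d t : ℕ) : H2d d :=
  tp2d d (ket2 0 + alpha2d d t • ket2 1) (cvec d (alpha2d d t))

lemma mem_orthogonal_span_iff {𝕜 E : Type*} [RCLike 𝕜] [NormedAddCommGroup E]
    [InnerProductSpace 𝕜 E] (S : Set E) (ξ : E) :
    ξ ∈ (Submodule.span 𝕜 S)ᗮ ↔ ∀ u ∈ S, inner 𝕜 u ξ = 0 := by
  rw [← Submodule.span_singleton_le_iff_mem, ← Submodule.isOrtho_iff_le, Submodule.isOrtho_comm,
    Submodule.isOrtho_span]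
  simp

lemma mem_sup_span_singleton_iff {R M : Type*} [Ring R] [AddCommGroup M] [Module R M]
    (p : Submodule R M) (z ξ : M) : ξ ∈ p ⊔ Submodule.span R {z} ↔ ∃ c : R, ξ - c • z ∈ p := by
  simp only [Submodule.mem_sup, Submodule.mem_span_singleton]
  constructor
  · rintro ⟨y, hy, _, ⟨c, rfl⟩, rfl⟩
    exact ⟨c, by simpa using hy⟩
  · rintro ⟨c, hc⟩
    exact ⟨_, hc, _, ⟨c, rfl⟩, sub_add_cancel ξ _⟩

open Polynomial

def vecPoly (n : ℕ) : EuclideanSpace ℂ (Fin n) →ₗ[ℂ] ℂ[X] :=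
  Fintype.linearCombination ℂ (fun r : Fin n => (X : ℂ[X]) ^ (r : ℕ)) ∘ₗ
    (WithLp.linearEquiv 2 ℂ (Fin n → ℂ)).toLinearMap

def tensorPoly (d : ℕ) : H2d d →ₗ[ℂ] ℂ[X] :=
  Fintype.linearCombination ℂ (fun p : Fin 2 × Fin d => (X : ℂ[X]) ^ ((p.1 : ℕ) + p.2)) ∘ₗ
    (WithLp.linearEquiv 2 ℂ (Fin 2 × Fin d → ℂ)).toLinearMap

lemma vecPoly_apply {n : ℕ} (v : EuclideanSpace ℂ (Fin n)) :
    vecPoly n v = ∑ r : Fin n, C (v r) * X ^ (r : ℕ) := by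
  simp [vecPoly, Fintype.linearCombination_apply, smul_eq_C_mul]

lemma tensorPoly_apply {d : ℕ} (ξ : H2d d) :
    tensorPoly d ξ = ∑ p : Fin 2 × Fin d, C (ξ p) * X ^ ((p.1 : ℕ) + p.2) := by
  simp [tensorPoly, Fintype.linearCombination_apply, smul_eq_C_mul]

lemma coeff_vecPoly {n : ℕ} (v : EuclideanSpace ℂ (Fin n)) (r : Fin n) :
    (vecPoly n v).coeff r = v r := by
  simp [vecPoly_apply, coeff_X_pow, Fin.val_inj]

lemma vecPoly_injective (n : ℕ) : Function.Injective (vecPoly n) := fun v w h => by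
  ext r
  rw [← coeff_vecPoly v r, ← coeff_vecPoly w r, h]

lemma vecPoly_fin_two (u : EuclideanSpace ℂ (Fin 2)) : vecPoly 2 u = C (u 0) + C (u 1) * X := by
  simp [vecPoly_apply, Fin.sum_univ_two]

@[simp] lemma tp2d_apply {d : ℕ} (u : EuclideanSpace ℂ (Fin 2)) (v : EuclideanSpace ℂ (Fin d))
    (p : Fin 2 × Fin d) : tp2d d u v p = u p.1 * v p.2 := rfl

lemma tensorPoly_tp2d {d : ℕ} (u : EuclideanSpace ℂ (Fin 2)) (v : EuclideanSpace ℂ (Fin d)) :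
    tensorPoly d (tp2d d u v) = vecPoly 2 u * vecPoly d v := by
  simp only [tensorPoly_apply, vecPoly_apply, Finset.sum_mul_sum, Fintype.sum_prod_type,
    tp2d_apply, map_mul, pow_add]
  refine Finset.sum_congr rfl fun s _ => Finset.sum_congr rfl fun r _ => ?_
  ring

lemma inner_z2d_eq_eval {d : ℕ} (lam : ℂ) (ξ : H2d d) :
    inner ℂ (z2d d lam) ξ = (tensorPoly d ξ).eval (starRingEnd ℂ lam) := by
  simp [PiLp.inner_apply, tensorPoly_apply, eval_finsetSum, z2d, pow_add]

lemma inner_z2dinf {d : ℕ} (hd : 0 < d) (ξ : H2d d) :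
    inner ℂ (z2dinf d) ξ = ξ (1, ⟨d - 1, Nat.sub_one_lt_of_lt hd⟩) := by
  rw [PiLp.inner_apply, Finset.sum_eq_single (1, ⟨d - 1, Nat.sub_one_lt_of_lt hd⟩)]
  · simp [z2dinf]
  · rintro ⟨s, r⟩ - hp
    by_cases hs : s = 1
    · have hr : (r : ℕ) ≠ d - 1 := fun hr => hp (by subst hs; congr; exact Fin.ext hr)
      simp [z2dinf, hr]
    · simp [z2dinf, hs]
  · simp

lemma mem_SP2d_iff {d : ℕ} (hd : 0 < d) (ξ : H2d d) :
    ξ ∈ SP2d d ↔ tensorPoly d ξ = 0 ∧ ξ (1, ⟨d - 1, Nat.sub_one_lt_of_lt hd⟩) = 0 := by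
  simp only [SP2d, F2d, mem_orthogonal_span_iff, Set.forall_mem_insert, Set.forall_mem_range,
    inner_z2dinf hd, inner_z2d_eq_eval, and_comm (a := tensorPoly d ξ = 0)]
  refine and_congr_right' ⟨fun h => Polynomial.funext fun μ => ?_, fun h lam => by simp [h]⟩
  simpa using h (starRingEnd ℂ μ)

def zOnePoly (d : ℕ) : ℂ[X] := (1 + X) * ∑ i ∈ Finset.range d, X ^ i

def qubit (γ : ℂ) : EuclideanSpace ℂ (Fin 2) := ket2 0 + γ • ket2 1

def ones (d : ℕ) : EuclideanSpace ℂ (Fin d) := WithLp.toLp 2 fun _ => 1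

@[simp] lemma qubit_zero (γ : ℂ) : qubit γ 0 = 1 := by simp [qubit, ket2]

@[simp] lemma qubit_one (γ : ℂ) : qubit γ 1 = γ := by simp [qubit, ket2]

lemma vecPoly_qubit (γ : ℂ) : vecPoly 2 (qubit γ) = 1 + C γ * X := by
  simp [vecPoly_fin_two]

lemma vecPoly_ones (d : ℕ) : vecPoly d (ones d) = ∑ i ∈ Finset.range d, X ^ i := by
  simp [vecPoly_apply, ones, Fin.sum_univ_eq_sum_range (fun i => (X : ℂ[X]) ^ i)]

lemma z2d_one_eq (d : ℕ) : z2d d 1 = tp2d d (qubit 1) (ones d) := by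
  ext ⟨s, r⟩
  fin_cases s <;> simp [z2d, tp2d, ones]

lemma tensorPoly_z2d_one (d : ℕ) : tensorPoly d (z2d d 1) = zOnePoly d := by
  rw [z2d_one_eq, tensorPoly_tp2d, vecPoly_qubit, vecPoly_ones, zOnePoly, map_one, one_mul]

lemma mem_SP2d1_iff {d : ℕ} (hd : 0 < d) (ξ : H2d d) :
    ξ ∈ SP2d1 d ↔ ∃ c : ℂ, tensorPoly d ξ = C c * zOnePoly d ∧
      ξ (1, ⟨d - 1, Nat.sub_one_lt_of_lt hd⟩) = c := by
  have hz : z2d d 1 (1, ⟨d - 1, Nat.sub_one_lt_of_lt hd⟩) = 1 := by simp [z2d]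
  simp only [SP2d1, mem_sup_span_singleton_iff, mem_SP2d_iff hd, map_sub, map_smul,
    tensorPoly_z2d_one, smul_eq_C_mul, sub_eq_zero, PiLp.sub_apply, PiLp.smul_apply, hz,
    smul_eq_mul, mul_one]

section alpha

open Complex

variable {d : ℕ}

lemma alpha2d_eq_neg_pow (t : ℕ) : alpha2d d t = -exp (2 * Real.pi * I / d) ^ t := by
  rw [alpha2d, ← exp_nat_mul]
  congr 2
  ring

lemma neg_alpha2d_pow (hd : d ≠ 0) (t : ℕ) : (-alpha2d d t) ^ d = 1 := by
  rw [alpha2d_eq_neg_pow, neg_neg, ← pow_mul, mul_comm t d, pow_mul,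
    (isPrimitiveRoot_exp d hd).pow_eq_one, one_pow]

lemma alpha2d_injOn (hd : d ≠ 0) : Set.InjOn (alpha2d d) (Set.Iio d) := fun t ht s hs h => by
  simp only [alpha2d_eq_neg_pow, neg_inj] at h
  exact (isPrimitiveRoot_exp d hd).pow_inj ht hs h

lemma alpha2d_ne_neg_one {t : ℕ} (ht : 0 < t) (htd : t < d) : alpha2d d t ≠ -1 := fun h =>
  ht.ne' <| alpha2d_injOn (by omega) htd (show 0 < d by omega) (by simpa [alpha2d] using h)

lemma exists_alpha2d_eq (hd : d ≠ 0) {a : ℂ} (ha : (-a) ^ d = 1) : ∃ t < d, alpha2d d t = a := by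
  have : NeZero d := ⟨hd⟩
  obtain ⟨t, ht, h⟩ := (isPrimitiveRoot_exp d hd).eq_pow_of_pow_eq_one ha
  exact ⟨t, ht, by rw [alpha2d_eq_neg_pow, h, neg_neg]⟩

lemma alpha2d_eq_one_iff {t : ℕ} (htd : t < d) : alpha2d d t = 1 ↔ 2 * t = d := by
  constructor
  · intro h
    have hsq : exp (2 * Real.pi * I / d) ^ (2 * t) = 1 := by
      rw [pow_mul', ← neg_sq, ← alpha2d_eq_neg_pow, h, one_pow]
    obtain ⟨k, hk⟩ := ((isPrimitiveRoot_exp d (by omega)).pow_eq_one_iff_dvd _).1 hsq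
    have ht : t ≠ 0 := by
      rintro rfl
      norm_num [alpha2d] at h
    rcases k with _ | _ | k <;> [omega; omega; nlinarith]
  · intro h
    have : (2 * Real.pi * I * t / d : ℂ) = Real.pi * I := by
      have ht : (t : ℂ) ≠ 0 := Nat.cast_ne_zero.2 (by omega)
      rw [← h]; push_cast; field_simp
    rw [alpha2d, this, exp_pi_mul_I, neg_neg]

end alpha

lemma vecPoly_cvec (d : ℕ) (a : ℂ) :
    vecPoly d (cvec d a) = C (1 + a)⁻¹ *
      (2 * ∑ i ∈ Finset.range d, X ^ i + C (a - 1) * ∑ i ∈ Finset.range d, (C (-a) * X) ^ i) := by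
  rw [vecPoly_apply, ← Fin.sum_univ_eq_sum_range (fun i => (X : ℂ[X]) ^ i),
    ← Fin.sum_univ_eq_sum_range (fun i => (C (-a) * X) ^ i), Finset.mul_sum, Finset.mul_sum,
    ← Finset.sum_add_distrib, Finset.mul_sum]
  refine Finset.sum_congr rfl fun r _ => ?_
  simp only [cvec, PiLp.toLp_apply, mul_pow, ← map_pow, div_eq_inv_mul, map_mul, map_add, map_sub,
    map_ofNat, neg_pow a]
  ring

lemma mul_vecPoly_cvec {d : ℕ} {a : ℂ} (ha : 1 + a ≠ 0) (had : (-a) ^ d = 1) :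
    (1 + C a * X) * vecPoly d (cvec d a) = zOnePoly d := by
  have hH := mul_neg_geom_sum (C (-a) * X) d
  have hG := mul_geom_sum (X : ℂ[X]) d
  have hinv : C (1 + a)⁻¹ * (1 + C a) = 1 := by
    rw [← map_one C, ← map_add, ← map_mul, inv_mul_cancel₀ ha]
  rw [mul_pow, ← map_pow, had, map_one, one_mul] at hH
  rw [vecPoly_cvec, zOnePoly, map_sub, map_one]
  simp only [map_neg] at hH ⊢
  linear_combination C (1 + a)⁻¹ * (C a - 1) * (hH + hG) +
    (1 + X) * (∑ i ∈ Finset.range d, X ^ i) * hinv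

lemma eval_zero_zOnePoly {d : ℕ} (hd : 0 < d) : (zOnePoly d).eval 0 = 1 := by
  obtain ⟨e, rfl⟩ := Nat.exists_eq_add_of_lt hd
  simp [zOnePoly, eval_finsetSum, Finset.sum_range_succ']

lemma eq_neg_one_or_of_eval_zOnePoly_eq_zero {d : ℕ} (hd : 0 < d) {x : ℂ}
    (hx : (zOnePoly d).eval x = 0) : x = -1 ∨ x ^ d = 1 ∧ x ≠ 1 := by
  rw [zOnePoly, eval_mul, eval_geom_sum, mul_eq_zero] at hx
  simp only [eval_add, eval_one, eval_X] at hx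
  rcases hx with hx | hx
  · exact Or.inl (by linear_combination hx)
  · have hx1 : x ≠ 1 := by
      rintro rfl
      simp [hd.ne'] at hx
    refine Or.inr ⟨?_, hx1⟩
    linear_combination -(mul_geom_sum x d) + (x - 1) * hx

lemma one_add_C_mul_X_ne_zero (γ : ℂ) : (1 + C γ * X : ℂ[X]) ≠ 0 := fun h => by
  simpa using congrArg (eval 0) h

lemma tp2d_smul_left {d : ℕ} (a : ℂ) (u : EuclideanSpace ℂ (Fin 2))
    (v : EuclideanSpace ℂ (Fin d)) : tp2d d (a • u) v = a • tp2d d u v := by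
  ext p
  simp [mul_assoc]

lemma tp2d_smul_right {d : ℕ} (a : ℂ) (u : EuclideanSpace ℂ (Fin 2))
    (v : EuclideanSpace ℂ (Fin d)) : tp2d d u (a • v) = a • tp2d d u v := by
  ext p
  simp [mul_left_comm]

lemma tp2d_eq_smul_qubit {d : ℕ} {γ c : ℂ} {w : EuclideanSpace ℂ (Fin d)}
    (hw : (1 + C γ * X) * vecPoly d w = zOnePoly d) {u : EuclideanSpace ℂ (Fin 2)}
    {v : EuclideanSpace ℂ (Fin d)} (hu : u 1 = γ * u 0)
    (huv : vecPoly 2 u * vecPoly d v = C c * zOnePoly d) :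
    tp2d d u v = c • tp2d d (qubit γ) w := by
  have hfac : (1 + C γ * X) * (vecPoly d (u 0 • v) - vecPoly d (c • w)) = 0 := by
    rw [vecPoly_fin_two, hu] at huv
    simp only [map_smul, smul_eq_C_mul, map_mul] at huv ⊢
    linear_combination huv - C c * hw
  have hv : u 0 • v = c • w := vecPoly_injective d <|
    sub_eq_zero.1 ((mul_eq_zero.1 hfac).resolve_left (one_add_C_mul_X_ne_zero γ))
  have hu' : u = u 0 • qubit γ := by
    ext i
    fin_cases i <;> simp [hu, mul_comm]
  rw [hu', tp2d_smul_left, ← tp2d_smul_right, hv, tp2d_smul_right]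

lemma tp2d_qubit_mem_SP2d1 {d : ℕ} (hd : 0 < d) {γ : ℂ} {w : EuclideanSpace ℂ (Fin d)}
    (hw : (1 + C γ * X) * vecPoly d w = zOnePoly d)
    (hlast : γ * w ⟨d - 1, Nat.sub_one_lt_of_lt hd⟩ = 1) :
    tp2d d (qubit γ) w ∈ SP2d1 d :=
  (mem_SP2d1_iff hd _).2 ⟨1, by rw [tensorPoly_tp2d, vecPoly_qubit, hw, map_one, one_mul], by simpa⟩

lemma eq_of_span_tp2d_qubit_eq {d : ℕ} {γ γ' : ℂ} {w w' : EuclideanSpace ℂ (Fin d)} {r : Fin d}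
    (hw : w r ≠ 0)
    (h : Submodule.span ℂ {tp2d d (qubit γ) w} = Submodule.span ℂ {tp2d d (qubit γ') w'}) :
    γ = γ' := by
  obtain ⟨k, hk⟩ := Submodule.mem_span_singleton.1 (h ▸ Submodule.mem_span_singleton_self _)
  have h0 := congrArg (· (0, r)) hk
  have h1 := congrArg (· (1, r)) hk
  simp only [PiLp.smul_apply, tp2d_apply, qubit_zero, qubit_one, smul_eq_mul, one_mul] at h0 h1
  apply mul_right_cancel₀ hw
  linear_combination h0 * γ' - h1

lemma cvec_zero {d : ℕ} (hd : 0 < d) {a : ℂ} (ha : 1 + a ≠ 0) : cvec d a ⟨0, hd⟩ = 1 := by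
  simp only [cvec, PiLp.toLp_apply, pow_zero, one_mul]
  field_simp
  ring

lemma mul_cvec_last {d : ℕ} (hd : 0 < d) {a : ℂ} (ha : 1 + a ≠ 0) (had : (-a) ^ d = 1) :
    a * cvec d a ⟨d - 1, Nat.sub_one_lt_of_lt hd⟩ = 1 := by
  obtain ⟨e, rfl⟩ : ∃ e, d = e + 1 := ⟨d - 1, by omega⟩
  have hpow : (-1) ^ e * a ^ e * a = -1 := by
    rw [pow_succ, neg_pow] at had
    linear_combination -had
  simp only [cvec, PiLp.toLp_apply, Nat.add_sub_cancel]
  field_simp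
  linear_combination (a - 1) * hpow

lemma tp2d_qubit_ne_zero {d : ℕ} (γ : ℂ) {w : EuclideanSpace ℂ (Fin d)} {r : Fin d}
    (hw : w r ≠ 0) : tp2d d (qubit γ) w ≠ 0 := fun h =>
  hw (by simpa using congrArg (· (0, r)) h)

lemma one_add_alpha2d_ne_zero {d t : ℕ} (ht : 0 < t) (htd : t < d) : 1 + alpha2d d t ≠ 0 :=
  fun h => alpha2d_ne_neg_one ht htd (by linear_combination h)

lemma pvec_ne_zero {d t : ℕ} (ht : 0 < t) (htd : t < d) : pvec d t ≠ 0 :=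
  tp2d_qubit_ne_zero _ (r := ⟨0, by omega⟩) <| by
    rw [cvec_zero _ (one_add_alpha2d_ne_zero ht htd)]; exact one_ne_zero

lemma pvec_mem_SP2d1 {d t : ℕ} (ht : 0 < t) (htd : t < d) : pvec d t ∈ SP2d1 d :=
  tp2d_qubit_mem_SP2d1 (by omega)
    (mul_vecPoly_cvec (one_add_alpha2d_ne_zero ht htd) (neg_alpha2d_pow (by omega) t))
    (mul_cvec_last (by omega) (one_add_alpha2d_ne_zero ht htd) (neg_alpha2d_pow (by omega) t))

lemma exists_qubit_root_of_tp2d_mem_SP2d1 {d : ℕ} (hd : 0 < d) {u : EuclideanSpace ℂ (Fin 2)}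
    {v : EuclideanSpace ℂ (Fin d)} (hne : tp2d d u v ≠ 0) (hmem : tp2d d u v ∈ SP2d1 d) :
    ∃ c ≠ 0, ∃ γ : ℂ, vecPoly 2 u * vecPoly d v = C c * zOnePoly d ∧ u 1 = γ * u 0 ∧
      (zOnePoly d).eval (-γ⁻¹) = 0 := by
  obtain ⟨c, huv, hlast⟩ := (mem_SP2d1_iff hd _).1 hmem
  rw [tensorPoly_tp2d] at huv
  have hc : c ≠ 0 := by
    rintro rfl
    rw [map_zero, zero_mul, mul_eq_zero, map_eq_zero_iff _ (vecPoly_injective 2),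
      map_eq_zero_iff _ (vecPoly_injective d)] at huv
    rcases huv with rfl | rfl <;> exact hne (by ext; simp)
  have hu1 : u 1 ≠ 0 := fun h => hc (by simp [← hlast, h])
  have hu0 : u 0 ≠ 0 := fun h => hc <| by
    simpa [vecPoly_fin_two, h, eval_zero_zOnePoly hd] using (congrArg (eval 0) huv).symm
  refine ⟨c, hc, u 1 / u 0, huv, (div_mul_cancel₀ _ hu0).symm, ?_⟩
  have hU : (vecPoly 2 u).eval (-(u 0 / u 1)) = 0 := by
    simp only [vecPoly_fin_two, eval_add, eval_C, eval_mul, eval_X]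
    field_simp
    ring
  have hroot := congrArg (eval (-(u 0 / u 1))) huv
  rw [eval_mul, hU, zero_mul, eval_mul, eval_C] at hroot
  rw [inv_div]
  exact (mul_eq_zero.1 hroot.symm).resolve_left hc

lemma span_tp2d_eq_of_mem_SP2d1 {d : ℕ} (hd : 0 < d) {u : EuclideanSpace ℂ (Fin 2)}
    {v : EuclideanSpace ℂ (Fin d)} (hne : tp2d d u v ≠ 0) (hmem : tp2d d u v ∈ SP2d1 d) :
    Submodule.span ℂ {tp2d d u v} = Submodule.span ℂ {z2d d 1} ∨
      ∃ t : ℕ, 1 ≤ t ∧ t ≤ d - 1 ∧ 2 * t ≠ d ∧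
        Submodule.span ℂ {tp2d d u v} = Submodule.span ℂ {pvec d t} := by
  obtain ⟨c, hc, γ, huv, hu, hroot⟩ := exists_qubit_root_of_tp2d_mem_SP2d1 hd hne hmem
  have hspan : ∀ w, (1 + C γ * X) * vecPoly d w = zOnePoly d →
      Submodule.span ℂ {tp2d d u v} = Submodule.span ℂ {tp2d d (qubit γ) w} := fun w hw => by
    rw [tp2d_eq_smul_qubit hw hu huv, Submodule.span_singleton_smul_eq (IsUnit.mk0 c hc)]
  rcases eq_or_ne γ 1 with rfl | hγ
  · left
    rw [z2d_one_eq]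
    exact hspan _ (by rw [vecPoly_ones, zOnePoly, map_one, one_mul])
  · right
    obtain ⟨hpow, hγ'⟩ : (-γ) ^ d = 1 ∧ γ ≠ -1 := by
      rcases eq_neg_one_or_of_eval_zOnePoly_eq_zero hd hroot with h | ⟨hpow, hne1⟩
      · exact (hγ (by simpa using h)).elim
      · exact ⟨by rwa [neg_inv, inv_pow, inv_eq_one] at hpow, fun h => hne1 (by rw [h]; norm_num)⟩
    obtain ⟨t, htd, rfl⟩ := exists_alpha2d_eq hd.ne' hpow
    have ht : 0 < t := Nat.pos_of_ne_zero fun h => hγ' (by rw [h]; simp [alpha2d])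
    exact ⟨t, by omega, by omega, fun h => hγ ((alpha2d_eq_one_iff htd).2 h),
      hspan _ (mul_vecPoly_cvec (one_add_alpha2d_ne_zero ht htd) (neg_alpha2d_pow hd.ne' t))⟩

lemma prodLines2d_SP2d1 {d : ℕ} (hd : 0 < d) :
    prodLines2d d (SP2d1 d) = insert (Submodule.span ℂ {z2d d 1})
      {L | ∃ t : ℕ, 1 ≤ t ∧ t ≤ d - 1 ∧ 2 * t ≠ d ∧ L = Submodule.span ℂ {pvec d t}} := by
  ext L
  constructor
  · rintro ⟨_, hne, hmem, ⟨u, v, rfl⟩, rfl⟩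
    rcases span_tp2d_eq_of_mem_SP2d1 hd hne hmem with h | ⟨t, ht, htd, h2t, h⟩
    · exact Or.inl h
    · exact Or.inr ⟨t, ht, htd, h2t, h⟩
  · rintro (rfl | ⟨t, ht, htd, -, rfl⟩)
    · refine ⟨z2d d 1, ?_, Submodule.mem_sup_right (Submodule.mem_span_singleton_self _),
        ⟨_, _, z2d_one_eq d⟩, rfl⟩
      rw [z2d_one_eq]
      exact tp2d_qubit_ne_zero _ (r := ⟨0, hd⟩) one_ne_zero
    · exact ⟨pvec d t, pvec_ne_zero (by omega) (by omega), pvec_mem_SP2d1 (by omega) (by omega),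
        ⟨_, _, rfl⟩, rfl⟩

lemma setOf_span_pvec_eq_image (d : ℕ) :
    {L | ∃ t : ℕ, 1 ≤ t ∧ t ≤ d - 1 ∧ 2 * t ≠ d ∧ L = Submodule.span ℂ {pvec d t}} =
      (fun t => Submodule.span ℂ {pvec d t}) '' ↑((Finset.Ioo 0 d).filter (2 * · ≠ d)) := by
  ext L
  simp only [Set.mem_ofPred_eq, Set.mem_image, Finset.coe_filter, Finset.mem_Ioo, eq_comm]
  exact exists_congr fun t => ⟨fun ⟨h1, h2, h3, h⟩ => ⟨⟨⟨by omega, by omega⟩, h3⟩, h⟩,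
    fun ⟨⟨⟨h1, h2⟩, h3⟩, h⟩ => ⟨by omega, by omega, h3, h⟩⟩

lemma span_pvec_injOn (d : ℕ) :
    Set.InjOn (fun t => Submodule.span ℂ {pvec d t}) (Set.Ioo 0 d) := fun t ⟨ht, htd⟩ s hs h => by
  have hcvec : cvec d (alpha2d d t) ⟨0, by omega⟩ ≠ 0 := by
    rw [cvec_zero _ (one_add_alpha2d_ne_zero ht htd)]
    exact one_ne_zero
  exact alpha2d_injOn (by omega) htd hs.2 (eq_of_span_tp2d_qubit_eq hcvec h)

lemma span_z2d_one_ne_span_pvec {d t : ℕ} (ht : 0 < t) (htd : t < d) (h2t : 2 * t ≠ d) :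
    Submodule.span ℂ {z2d d 1} ≠ Submodule.span ℂ {pvec d t} := fun h => by
  rw [z2d_one_eq] at h
  exact h2t ((alpha2d_eq_one_iff htd).1
    (eq_of_span_tp2d_qubit_eq (r := ⟨0, by omega⟩) (w := ones d) one_ne_zero h).symm)

lemma card_filter_two_mul_ne_add_one {d : ℕ} (hd : 0 < d) :
    ((Finset.Ioo 0 d).filter (2 * · ≠ d)).card + 1 = if Odd d then d else d - 1 := by
  split_ifs with hodd
  · have hall : ∀ t ∈ Finset.Ioo 0 d, 2 * t ≠ d := fun t _ h =>
      Nat.not_even_iff_odd.2 hodd ⟨t, by omega⟩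
    rw [Finset.filter_true_of_mem hall, Nat.card_Ioo]
    omega
  · obtain ⟨m, rfl⟩ := Nat.not_odd_iff_even.1 hodd
    rw [Finset.filter_congr (q := (· ≠ m)) (fun t _ => by omega), Finset.filter_ne',
      Finset.card_erase_of_mem (Finset.mem_Ioo.2 ⟨by omega, by omega⟩), Nat.card_Ioo]
    omega

theorem statement12 (d : ℕ) (hd : 2 < d) :
    (prodLines2d d (SP2d1 d)).Finite ∧
    (prodLines2d d (SP2d1 d)).ncard = (if Odd d then d else d - 1) ∧
    prodLines2d d (SP2d1 d) =
      insert (Submodule.span ℂ {z2d d 1})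
        {L | ∃ t : ℕ, 1 ≤ t ∧ t ≤ d - 1 ∧ 2 * t ≠ d ∧ L = Submodule.span ℂ {pvec d t}} := by
  have hlines := prodLines2d_SP2d1 (show 0 < d by omega)
  set T := (Finset.Ioo 0 d).filter (2 * · ≠ d)
  have hT : (T : Set ℕ) ⊆ Set.Ioo 0 d := fun t ht => Finset.mem_Ioo.1 (Finset.mem_filter.1 ht).1
  have hfin : ((fun t => Submodule.span ℂ {pvec d t}) '' T).Finite := T.finite_toSet.image _
  have hz : Submodule.span ℂ {z2d d 1} ∉ (fun t => Submodule.span ℂ {pvec d t}) '' T :=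
    fun ⟨t, ht, h⟩ => span_z2d_one_ne_span_pvec (hT ht).1 (hT ht).2 (Finset.mem_filter.1 ht).2 h.symm
  rw [setOf_span_pvec_eq_image] at hlines
  refine ⟨hlines ▸ hfin.insert _, ?_, by rw [hlines, setOf_span_pvec_eq_image]⟩
  rw [hlines, Set.ncard_insert_of_notMem hz hfin, ((span_pvec_injOn d).mono hT).ncard_image,
    Set.ncard_coe_finset, card_filter_two_mul_ne_add_one (by omega)]
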